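/- Let m > 0, k, M, θ̇₀ be real constants. On the open set of points (r, ϑ, φ, p_r, p_ϑ, p_φ) with r > 0, sin ϑ ≠ 0, and 1 + (θ̇₀/m)sin(2φ) > 0, consider the Hamiltonian H' = (1/(2m))[p_r² + M² p_ϑ²/r² + (1 + (θ̇₀/m)sin(2φ)) p_φ²/(r² sin²ϑ)] − k/r and the function D_φ = (1 + (θ̇₀/m)sin(2φ))^{1/2} p_φ. Then D_φ is an integral of motion: the canonical Poisson bracket {H', D_φ} = Σ (∂H'/∂p ∂D_φ/∂q − ∂H'/∂q ∂D_φ/∂p), summed over the three conjugate pairs (r,p_r), (ϑ,p_ϑ), (φ,p_φ), vanishes identically on this set. -/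

import Mathlib

open scoped BigOperators

/-- Phase space: an open subset of ℝ⁶ with spherical-polar coordinates
`z.1 = (r, ϑ, φ)` and conjugate momenta `z.2 = (p_r, p_ϑ, p_φ)`. -/
abbrev PhaseSpace := (Fin 3 → ℝ) × (Fin 3 → ℝ)

/-- Partial derivative of `f` with respect to the position coordinate indexed by `ν`. -/
noncomputable def pdQ (f : PhaseSpace → ℝ) (ν : Fin 3) (z : PhaseSpace) : ℝ :=
  fderiv ℝ f z (Pi.single ν 1, 0)

/-- Partial derivative of `f` with respect to the momentum coordinate indexed by `ν`. -/
noncomputable def pdP (f : PhaseSpace → ℝ) (ν : Fin 3) (z : PhaseSpace) : ℝ :=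
  fderiv ℝ f z (0, Pi.single ν 1)

/-- Canonical Poisson bracket, summed over the three conjugate pairs. -/
noncomputable def canBracket (f g : PhaseSpace → ℝ) (z : PhaseSpace) : ℝ :=
  ∑ ν : Fin 3, (pdP f ν z * pdQ g ν z - pdQ f ν z * pdP g ν z)

/-- The Kepler Hamiltonian in spherical-polar coordinates:
`H' = (1/(2m))[p_r² + M² p_ϑ²/r² + (1 + (θ̇₀/m) sin 2φ) p_φ²/(r² sin²ϑ)] − k/r`. -/
noncomputable def Hsph (m k M θ0 : ℝ) (z : PhaseSpace) : ℝ :=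
  (1 / (2 * m)) * ((z.2 0) ^ 2 + M ^ 2 * (z.2 1) ^ 2 / (z.1 0) ^ 2
      + (1 + (θ0 / m) * Real.sin (2 * z.1 2)) * (z.2 2) ^ 2
        / ((z.1 0) ^ 2 * (Real.sin (z.1 1)) ^ 2))
    - k / z.1 0

/-- `D_φ = (1 + (θ̇₀/m) sin 2φ)^{1/2} p_φ`. -/
noncomputable def Dphi (m θ0 : ℝ) (z : PhaseSpace) : ℝ :=
  Real.sqrt (1 + (θ0 / m) * Real.sin (2 * z.1 2)) * z.2 2

/-!
Since `D_φ` depends only on the pair `(φ, p_φ)`, only that pair contributes to the bracket.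
Writing `s(φ) = 1 + (θ̇₀/m) sin 2φ`, the Hamiltonian depends on this pair only through
`s p_φ² / (2 m r² sin² ϑ)`, and with `D_φ = √s p_φ` the two surviving terms are
`(s p_φ / (m r² sin² ϑ)) · (s' p_φ / (2√s))` and `(s' p_φ² / (2 m r² sin² ϑ)) · √s`,
which agree because `s / √s = √s`.
-/

section PartialDerivatives

variable {f : PhaseSpace → ℝ} {z : PhaseSpace} {ν : Fin 3} {d : ℝ}

theorem pdQ_eq_of_hasDerivAt (hf : DifferentiableAt ℝ f z)
    (hd : HasDerivAt (fun x => f (Function.update z.1 ν x, z.2)) d (z.1 ν)) :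
    pdQ f ν z = d := by
  have hline : HasDerivAt (fun x => (Function.update z.1 ν x, z.2)) (Pi.single ν 1, 0) (z.1 ν) :=
    (hasDerivAt_update z.1 ν (z.1 ν)).prodMk (hasDerivAt_const _ _)
  have hf' : HasFDerivAt f (fderiv ℝ f z) (Function.update z.1 ν (z.1 ν), z.2) := by
    simpa using hf.hasFDerivAt
  exact (hf'.comp_hasDerivAt _ hline).unique hd

theorem pdP_eq_of_hasDerivAt (hf : DifferentiableAt ℝ f z)
    (hd : HasDerivAt (fun x => f (z.1, Function.update z.2 ν x)) d (z.2 ν)) :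
    pdP f ν z = d := by
  have hline : HasDerivAt (fun x => (z.1, Function.update z.2 ν x)) (0, Pi.single ν 1) (z.2 ν) :=
    (hasDerivAt_const _ _).prodMk (hasDerivAt_update z.2 ν (z.2 ν))
  have hf' : HasFDerivAt f (fderiv ℝ f z) (z.1, Function.update z.2 ν (z.2 ν)) := by
    simpa using hf.hasFDerivAt
  exact (hf'.comp_hasDerivAt _ hline).unique hd

end PartialDerivatives

theorem canBracket_eq_of_single_pair {f g : PhaseSpace → ℝ} {z : PhaseSpace} (j : Fin 3)
    (hg : ∀ ν ≠ j, pdQ g ν z = 0 ∧ pdP g ν z = 0) :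
    canBracket f g z = pdP f j z * pdQ g j z - pdQ f j z * pdP g j z := by
  refine Finset.sum_eq_single j (fun ν _ hν => ?_) (by simp)
  simp [(hg ν hν).1, (hg ν hν).2]

section Kepler

variable {m k M θ0 : ℝ} {z : PhaseSpace}

theorem hasDerivAt_one_add_mul_sin_two_mul (c φ : ℝ) :
    HasDerivAt (fun x => 1 + c * Real.sin (2 * x)) (c * (2 * Real.cos (2 * φ))) φ := by
  simpa [mul_comm] using (((hasDerivAt_id φ).const_mul 2).sin.const_mul c).const_add 1

theorem differentiableAt_Hsph (hr : 0 < z.1 0) (hϑ : Real.sin (z.1 1) ≠ 0) :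
    DifferentiableAt ℝ (Hsph m k M θ0) z := by
  unfold Hsph
  fun_prop (disch := positivity)

theorem differentiableAt_Dphi (hs : 0 < 1 + (θ0 / m) * Real.sin (2 * z.1 2)) :
    DifferentiableAt ℝ (Dphi m θ0) z := by
  unfold Dphi
  fun_prop (disch := positivity)

theorem pdQ_Hsph_two (hr : 0 < z.1 0) (hϑ : Real.sin (z.1 1) ≠ 0) :
    pdQ (Hsph m k M θ0) 2 z = 1 / (2 * m) * (θ0 / m * (2 * Real.cos (2 * z.1 2)) * z.2 2 ^ 2
      / (z.1 0 ^ 2 * Real.sin (z.1 1) ^ 2)) := by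
  refine pdQ_eq_of_hasDerivAt (differentiableAt_Hsph hr hϑ) ?_
  simp only [Hsph, Function.update_self, ne_eq, Fin.reduceEq, not_false_eq_true,
    Function.update_of_ne]
  exact ((((hasDerivAt_one_add_mul_sin_two_mul _ _).mul_const _).div_const _).const_add _
    |>.const_mul _).sub_const _

theorem pdP_Hsph_two (hr : 0 < z.1 0) (hϑ : Real.sin (z.1 1) ≠ 0) :
    pdP (Hsph m k M θ0) 2 z = 1 / (2 * m) * ((1 + θ0 / m * Real.sin (2 * z.1 2)) * (2 * z.2 2)
      / (z.1 0 ^ 2 * Real.sin (z.1 1) ^ 2)) := by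
  refine pdP_eq_of_hasDerivAt (differentiableAt_Hsph hr hϑ) ?_
  simp only [Hsph, Function.update_self, ne_eq, Fin.reduceEq, not_false_eq_true,
    Function.update_of_ne]
  have hsq : HasDerivAt (fun x : ℝ => x ^ 2) (2 * z.2 2) (z.2 2) := by
    simpa using hasDerivAt_pow 2 (z.2 2)
  exact (((hsq.const_mul _).div_const _).const_add _ |>.const_mul _).sub_const _

theorem pdQ_Dphi_two (hs : 0 < 1 + (θ0 / m) * Real.sin (2 * z.1 2)) :
    pdQ (Dphi m θ0) 2 z = θ0 / m * (2 * Real.cos (2 * z.1 2))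
      / (2 * Real.sqrt (1 + (θ0 / m) * Real.sin (2 * z.1 2))) * z.2 2 := by
  refine pdQ_eq_of_hasDerivAt (differentiableAt_Dphi hs) ?_
  simp only [Dphi, Function.update_self]
  exact ((hasDerivAt_one_add_mul_sin_two_mul _ _).sqrt hs.ne').mul_const _

theorem pdP_Dphi_two (hs : 0 < 1 + (θ0 / m) * Real.sin (2 * z.1 2)) :
    pdP (Dphi m θ0) 2 z = Real.sqrt (1 + (θ0 / m) * Real.sin (2 * z.1 2)) := by
  refine pdP_eq_of_hasDerivAt (differentiableAt_Dphi hs) ?_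
  simp only [Dphi, Function.update_self]
  simpa using (hasDerivAt_id (z.2 2)).const_mul _

theorem pdQ_Dphi_eq_zero_and_pdP_Dphi_eq_zero (hs : 0 < 1 + (θ0 / m) * Real.sin (2 * z.1 2))
    {ν : Fin 3} (hν : ν ≠ 2) : pdQ (Dphi m θ0) ν z = 0 ∧ pdP (Dphi m θ0) ν z = 0 := by
  constructor
  · refine pdQ_eq_of_hasDerivAt (differentiableAt_Dphi hs) ?_
    simp only [Dphi, Function.update_of_ne hν.symm]
    exact hasDerivAt_const _ _
  · refine pdP_eq_of_hasDerivAt (differentiableAt_Dphi hs) ?_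
    simp only [Dphi, Function.update_of_ne hν.symm]
    exact hasDerivAt_const _ _

end Kepler

theorem stmt10_general (m k M θ0 : ℝ) :
    ∀ z : PhaseSpace, 0 < z.1 0 → Real.sin (z.1 1) ≠ 0 →
      0 < 1 + (θ0 / m) * Real.sin (2 * z.1 2) →
      canBracket (Hsph m k M θ0) (Dphi m θ0) z = 0 := by
  intro z hr hϑ hs
  rw [canBracket_eq_of_single_pair 2 fun ν hν => pdQ_Dphi_eq_zero_and_pdP_Dphi_eq_zero hs hν,
    pdQ_Hsph_two hr hϑ, pdP_Hsph_two hr hϑ, pdQ_Dphi_two hs, pdP_Dphi_two hs]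
  have hsqrt := (Real.sqrt_pos.2 hs).ne'
  have hsq := Real.sq_sqrt hs.le
  generalize 1 + θ0 / m * Real.sin (2 * z.1 2) = s at hsqrt hsq ⊢
  field_simp
  rw [hsq]
  ring

/-- `D_φ` is an integral of motion for the spherical-polar Kepler Hamiltonian:
`{H', D_φ} = 0` on the open set `r > 0`, `sin ϑ ≠ 0`, `1 + (θ̇₀/m) sin 2φ > 0`. -/
theorem stmt10 (m k M θ0 : ℝ) (hm : 0 < m) :
    ∀ z : PhaseSpace, 0 < z.1 0 → Real.sin (z.1 1) ≠ 0 →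
      0 < 1 + (θ0 / m) * Real.sin (2 * z.1 2) →
      canBracket (Hsph m k M θ0) (Dphi m θ0) z = 0 :=
  stmt10_general m k M θ0
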